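/- arXiv:1511.01344 — 4 statements merged into one kernel-verified Lean document; each statement's English description precedes it below -/
import Mathlib

section
/- Let 0 < k < 1, α > 0, 0 < β < 1, p ∈ (0,1), and let x* = (α(2−k)(1−β)^(2−k)/(p(1−(1−β)^(2−k))))^(1/(2−k)). Define the map F(x) = (1−β) · ((x*)^(2−k)((1/(1−β))^(2−k) − 1) + x^(2−k))^(1/(2−k)) on (0,∞), which gives the post-loss window starting from post-loss window x in the fluid model. Then F(x*) = x*, and for 0 < x < x* we have x < F(x) < x*, while for x > x* we have x* < F(x) < x. Consequently, for any initial x > 0, the iterates F^n(x) converge monotonically to x*. -/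
open Real Filter

/-- Global stability of the fixed point of the post-loss window map for the
TCP Compound deterministic-loss fluid model. -/
theorem tcp_compound_fluid_global_stability
    (k α β p : ℝ) (hk0 : 0 < k) (hk1 : k < 1) (hα : 0 < α)
    (hβ0 : 0 < β) (hβ1 : β < 1) (hp0 : 0 < p) (hp1 : p < 1) :
    ∀ xs F, xs = (α * (2 - k) * (1 - β) ^ (2 - k) / (p * (1 - (1 - β) ^ (2 - k)))) ^ (1 / (2 - k)) →
      F = (fun x : ℝ =>
        (1 - β) * (xs ^ (2 - k) * ((1 / (1 - β)) ^ (2 - k) - 1) + x ^ (2 - k)) ^ (1 / (2 - k))) →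
      F xs = xs ∧
      (∀ x : ℝ, 0 < x → x < xs → x < F x ∧ F x < xs) ∧
      (∀ x : ℝ, xs < x → xs < F x ∧ F x < x) ∧
      (∀ x : ℝ, 0 < x →
        Tendsto (fun n => F^[n] x) atTop (nhds xs) ∧
        (Monotone (fun n => F^[n] x) ∨ Antitone (fun n => F^[n] x))) := by
  intro xs F hxs hF
  set e : ℝ := 2 - k with he_def
  have he1 : 1 < e := by simp only [he_def]; linarith
  have he : 0 < e := by linarith
  have hc0 : 0 < 1 - β := by linarith
  have hc1 : 1 - β < 1 := by linarith
  have hce0 : 0 < (1 - β) ^ e := Real.rpow_pos_of_pos hc0 e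
  have hce1 : (1 - β) ^ e < 1 := Real.rpow_lt_one hc0.le hc1 he
  -- e-th roots undo e-th powers on nonnegatives
  have hroot : ∀ a : ℝ, 0 ≤ a → (a ^ e) ^ (1 / e) = a := by
    intro a ha
    rw [← Real.rpow_mul ha, mul_one_div, div_self he.ne', Real.rpow_one]
  -- comparison of e-th powers
  have hltiff : ∀ a b : ℝ, 0 ≤ a → 0 ≤ b → (a ^ e < b ^ e ↔ a < b) := by
    intro a b ha hb
    constructor
    · intro h
      by_contra hab
      exact absurd (Real.rpow_le_rpow hb (not_lt.mp hab) he.le) (not_le.mpr h)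
    · intro h
      exact Real.rpow_lt_rpow ha h he
  have hxs0 : 0 < xs := by
    rw [hxs]
    apply Real.rpow_pos_of_pos
    apply div_pos
    · have : 0 < (1 - β) ^ (2 - k) := Real.rpow_pos_of_pos hc0 _
      have h2k : 0 < 2 - k := by linarith
      positivity
    · apply mul_pos hp0; linarith [hce1]
  set X : ℝ := xs ^ e with hX_def
  have hX0 : 0 < X := Real.rpow_pos_of_pos hxs0 e
  have hinv : (1 / (1 - β)) ^ e = ((1 - β) ^ e)⁻¹ := by
    rw [one_div, ← Real.inv_rpow hc0.le]
  have hA0 : 0 < X * ((1 / (1 - β)) ^ e - 1) := by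
    apply mul_pos hX0
    rw [hinv]
    have : 1 < ((1 - β) ^ e)⁻¹ := (one_lt_inv₀ hce0).mpr hce1
    linarith
  -- key identity for the e-th power of F
  have hFe : ∀ x : ℝ, 0 ≤ x →
      (F x) ^ e = X * (1 - (1 - β) ^ e) + (1 - β) ^ e * x ^ e := by
    intro x hx
    have hz : (0:ℝ) ≤ X * ((1 / (1 - β)) ^ e - 1) + x ^ e := by
      have := Real.rpow_nonneg hx e
      linarith
    rw [hF]
    simp only [← he_def, ← hX_def]
    rw [Real.mul_rpow hc0.le (Real.rpow_nonneg hz _), ← Real.rpow_mul hz,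
      one_div_mul_cancel he.ne', Real.rpow_one, hinv]
    field_simp
  have hF0 : ∀ x : ℝ, 0 ≤ x → 0 < F x := by
    intro x hx
    rw [hF]
    simp only [← he_def, ← hX_def]
    apply mul_pos hc0
    apply Real.rpow_pos_of_pos
    have := Real.rpow_nonneg hx e
    linarith
  -- fixed point
  have hfix : F xs = xs := by
    have h1 : (F xs) ^ e = xs ^ e := by
      rw [hFe xs hxs0.le, ← hX_def]; ring
    have h2 := hroot (F xs) (hF0 xs hxs0.le).le
    have h3 := hroot xs hxs0.le
    rw [h1] at h2
    rw [← h2, h3]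
  -- below the fixed point
  have hbelow : ∀ x : ℝ, 0 < x → x < xs → x < F x ∧ F x < xs := by
    intro x hx hxlt
    have hxe : x ^ e < X := by
      rw [hX_def]; exact (hltiff x xs hx.le hxs0.le).mpr hxlt
    have h1 : x ^ e < (F x) ^ e := by
      rw [hFe x hx.le]; nlinarith
    have h2 : (F x) ^ e < xs ^ e := by
      rw [hFe x hx.le, ← hX_def]; nlinarith
    exact ⟨(hltiff x (F x) hx.le (hF0 x hx.le).le).mp h1,
      (hltiff (F x) xs (hF0 x hx.le).le hxs0.le).mp h2⟩
  -- above the fixed point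
  have habove : ∀ x : ℝ, xs < x → xs < F x ∧ F x < x := by
    intro x hxlt
    have hx : 0 < x := hxs0.trans hxlt
    have hxe : X < x ^ e := by
      rw [hX_def]; exact (hltiff xs x hxs0.le hx.le).mpr hxlt
    have h1 : xs ^ e < (F x) ^ e := by
      rw [hFe x hx.le, ← hX_def]; nlinarith
    have h2 : (F x) ^ e < x ^ e := by
      rw [hFe x hx.le]; nlinarith
    exact ⟨(hltiff xs (F x) hxs0.le (hF0 x hx.le).le).mp h1,
      (hltiff (F x) x (hF0 x hx.le).le hx.le).mp h2⟩
  refine ⟨hfix, hbelow, habove, ?_⟩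
  intro x hx
  -- positivity of all iterates
  have hpos : ∀ n : ℕ, 0 < F^[n] x := by
    intro n
    induction n with
    | zero => simpa using hx
    | succ n ih =>
        rw [Function.iterate_succ_apply']
        exact hF0 _ ih.le
  -- explicit formula for e-th powers of iterates
  have hformula : ∀ n : ℕ, (F^[n] x) ^ e = X + ((1 - β) ^ e) ^ n * (x ^ e - X) := by
    intro n
    induction n with
    | zero => simp
    | succ n ih =>
        rw [Function.iterate_succ_apply', hFe _ (hpos n).le, ih]
        ring
  constructor
  · -- convergence
    have hgeo : Tendsto (fun n : ℕ => ((1 - β) ^ e) ^ n) atTop (nhds 0) :=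
      tendsto_pow_atTop_nhds_zero_of_lt_one hce0.le hce1
    have hin : Tendsto (fun n : ℕ => X + ((1 - β) ^ e) ^ n * (x ^ e - X)) atTop (nhds X) := by
      have := (hgeo.mul_const (x ^ e - X)).const_add X
      simpa using this
    have hout : Tendsto (fun n : ℕ => (X + ((1 - β) ^ e) ^ n * (x ^ e - X)) ^ (1 / e))
        atTop (nhds xs) := by
      have := hin.rpow_const (Or.inr (by positivity : (0:ℝ) ≤ 1 / e))
      rwa [hX_def, hroot xs hxs0.le] at this
    refine hout.congr fun n => ?_
    rw [← hformula n, hroot _ (hpos n).le]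
  · -- monotonicity
    rcases le_or_gt x xs with hle | hlt
    · left
      have hinv2 : ∀ n : ℕ, F^[n] x ≤ xs := by
        intro n
        induction n with
        | zero => simpa using hle
        | succ n ih =>
            rw [Function.iterate_succ_apply']
            rcases eq_or_lt_of_le ih with h | h
            · rw [h, hfix]
            · exact (hbelow _ (hpos n) h).2.le
      apply monotone_nat_of_le_succ
      intro n
      rw [Function.iterate_succ_apply']
      rcases eq_or_lt_of_le (hinv2 n) with h | h
      · rw [h, hfix]
      · exact (hbelow _ (hpos n) h).1.le
    · right
      have hinv2 : ∀ n : ℕ, xs ≤ F^[n] x := by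
        intro n
        induction n with
        | zero => simpa using hlt.le
        | succ n ih =>
            rw [Function.iterate_succ_apply']
            rcases eq_or_lt_of_le ih with h | h
            · rw [← h, hfix]
            · exact (habove _ h).1.le
      apply antitone_nat_of_succ_le
      intro n
      rw [Function.iterate_succ_apply']
      rcases eq_or_lt_of_le (hinv2 n) with h | h
      · rw [← h, hfix]
      · exact (habove _ h).2.le
end

section
/- Fix k = 3/4, α > 0, x ≥ 1, y ≥ 0. For p ∈ (0,1), let G_p be the geometric-type random variable with P(G_p > m) = (1−p)^{x₀ + x₁ + ⋯ + x_m}, where x₀ = ⌊x/p^{1/(2−k)}⌋ and x_i = ⌊x₀(1 + α(1−k)i/x₀^{1−k})^{1/(1−k)}⌋. Then as p → 0, P(p^{(1−k)/(2−k)} G_p ≥ y) converges to exp(−xy − 2α(1−k)x^k y² − 2α²(1−k)² x^{2k−1} y³ − α³(1−k)³ x^{3k−2} y⁴ − α⁴(1−k)⁴ x^{4k−3} y⁵ / 5). -/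
/-!
The loss exponent `p · (x₀ + ⋯ + x_m)` is a Riemann sum. For `k = 3/4` the windows are exact
fourth powers, `x₀ (1 + α i / (4 x₀^{1/4}))⁴ = (x₀^{1/4} + α i / 4)⁴`, so with `q = p^{1/5}` the
exponent (before flooring) is `q⁵ ∑_{i ≤ m} (x₀^{1/4} + α i / 4)⁴`. Expanding binomially and using
Faulhaber's formula, `q^{j+1} ∑_{i < n} i^j → w^{j+1}/(j+1)` whenever `q n → w`, because only the
leading Bernoulli term survives; here `q x₀^{1/4} → x^{1/4}` and `q (m + 1) → y`, which gives
`∫₀^y (x^{1/4} + α t / 4)⁴ dt`, the polynomial in the statement. Flooring the windows costs at most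
`p (m + 1) → 0`, and `(1 - p)^S = exp (S log (1 - p))` with `log (1 - p) / p → -1`.
-/
open Real Filter Finset Topology

theorem sum_range_pow_real (n d : ℕ) :
    ∑ i ∈ range n, (i : ℝ) ^ d =
      ∑ j ∈ range (d + 1), bernoulli j * (d + 1).choose j * (n : ℝ) ^ (d + 1 - j) / (d + 1) := by
  exact_mod_cast congrArg (Rat.cast : ℚ → ℝ) (sum_range_pow n d)

theorem tendsto_pow_succ_mul_sum_range_pow {ι : Type*} {l : Filter ι} {q : ι → ℝ} {n : ι → ℕ}
    {w : ℝ} (hq : Tendsto q l (𝓝 0)) (hqn : Tendsto (fun t => q t * n t) l (𝓝 w)) (d : ℕ) :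
    Tendsto (fun t => q t ^ (d + 1) * ∑ i ∈ range (n t), (i : ℝ) ^ d) l
      (𝓝 (w ^ (d + 1) / (d + 1))) := by
  have hterm : ∀ j ∈ range (d + 1), Tendsto
      (fun t => bernoulli j * (d + 1).choose j * q t ^ j * (q t * n t) ^ (d + 1 - j) / (d + 1)) l
      (𝓝 (bernoulli j * (d + 1).choose j * (0 : ℝ) ^ j * w ^ (d + 1 - j) / (d + 1))) :=
    fun j _ => ((tendsto_const_nhds.mul (hq.pow j)).mul (hqn.pow _)).div_const _
  convert tendsto_finsetSum _ hterm using 1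
  · ext t
    rw [sum_range_pow_real, mul_sum]
    refine sum_congr rfl fun j hj => ?_
    have hj : j ≤ d + 1 := (mem_range.mp hj).le
    rw [← Nat.add_sub_cancel' hj, pow_add, Nat.add_sub_cancel_left]
    ring
  · rw [sum_range_succ']
    simp

theorem tendsto_pow_succ_mul_sum_range_add_mul_pow {ι : Type*} {l : Filter ι} {q B : ι → ℝ}
    {n : ι → ℕ} {b c w : ℝ} (hq : Tendsto q l (𝓝 0)) (hqn : Tendsto (fun t => q t * n t) l (𝓝 w))
    (hqB : Tendsto (fun t => q t * B t) l (𝓝 b)) (d : ℕ) :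
    Tendsto (fun t => q t ^ (d + 1) * ∑ i ∈ range (n t), (B t + c * i) ^ d) l
      (𝓝 (∑ j ∈ range (d + 1), c ^ j * b ^ (d - j) * d.choose j * (w ^ (j + 1) / (j + 1)))) := by
  have hterm : ∀ j ∈ range (d + 1), Tendsto (fun t => c ^ j * (q t * B t) ^ (d - j) * d.choose j *
      (q t ^ (j + 1) * ∑ i ∈ range (n t), (i : ℝ) ^ j)) l
      (𝓝 (c ^ j * b ^ (d - j) * d.choose j * (w ^ (j + 1) / (j + 1)))) := fun j _ =>
    ((tendsto_const_nhds.mul (hqB.pow _)).mul tendsto_const_nhds).mul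
      (tendsto_pow_succ_mul_sum_range_pow hq hqn j)
  refine (tendsto_finsetSum _ hterm).congr fun t => ?_
  simp_rw [add_comm (B t), add_pow, sum_comm (s := range (n t)), mul_sum]
  refine sum_congr rfl fun j hj => sum_congr rfl fun i _ => ?_
  have hj : j ≤ d := Nat.lt_succ_iff.mp (mem_range.mp hj)
  rw [← Nat.sub_add_cancel hj]
  simp only [Nat.add_sub_cancel]
  ring

theorem tendsto_mul_sum_natFloor {ι : Type*} {l : Filter ι} {s : ι → ℝ} {n : ι → ℕ}
    {f : ι → ℕ → ℝ} {L : ℝ} (hs : ∀ᶠ t in l, 0 ≤ s t) (hf : ∀ t i, 0 ≤ f t i)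
    (hsum : Tendsto (fun t => s t * ∑ i ∈ range (n t), f t i) l (𝓝 L))
    (hsn : Tendsto (fun t => s t * n t) l (𝓝 0)) :
    Tendsto (fun t => s t * ∑ i ∈ range (n t), (⌊f t i⌋₊ : ℝ)) l (𝓝 L) := by
  refine tendsto_of_tendsto_of_tendsto_of_le_of_le' (by simpa using hsum.sub hsn) hsum ?_ ?_
  <;> filter_upwards [hs] with t ht
  · rw [← mul_sub]
    refine mul_le_mul_of_nonneg_left ?_ ht
    have hlow : ∑ i ∈ range (n t), (f t i - 1) ≤ ∑ i ∈ range (n t), (⌊f t i⌋₊ : ℝ) :=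
      sum_le_sum fun i _ => (Nat.sub_one_lt_floor _).le
    simpa using hlow
  · exact mul_le_mul_of_nonneg_left (sum_le_sum fun i _ => Nat.floor_le (hf t i)) ht

theorem tendsto_mul_natFloor_div {ι : Type*} {l : Filter ι} {f : ι → ℝ} {a : ℝ}
    (hf : Tendsto f l (𝓝[>] 0)) (ha : 0 ≤ a) :
    Tendsto (fun t => f t * ⌊a / f t⌋₊) l (𝓝 a) :=
  ((tendsto_nat_floor_mul_div_atTop ha).comp (tendsto_inv_nhdsGT_zero.comp hf)).congr
    fun t => by simp [div_eq_mul_inv, mul_comm]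

theorem tendsto_one_sub_rpow_of_tendsto_mul {S : ℝ → ℝ} {L : ℝ}
    (hS : Tendsto (fun p => p * S p) (𝓝[>] 0) (𝓝 L)) :
    Tendsto (fun p => (1 - p) ^ S p) (𝓝[>] 0) (𝓝 (exp (-L))) := by
  have hlog : Tendsto (fun p : ℝ => p⁻¹ * log (1 + -1 / p⁻¹)) (𝓝[>] 0) (𝓝 (-1)) :=
    (tendsto_mul_log_one_add_div_atTop (-1)).comp tendsto_inv_nhdsGT_zero
  have hexp := (continuous_exp.tendsto _).comp (hlog.mul hS)
  rw [neg_one_mul] at hexp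
  refine hexp.congr' ?_
  filter_upwards [Ioo_mem_nhdsGT one_pos] with p ⟨hp0, hp1⟩
  rw [rpow_def_of_pos (by linarith)]
  simp only [Function.comp_apply]
  congr 1
  field_simp
  ring_nf

theorem tendsto_rpow_const_nhdsGT_zero {e : ℝ} (he : 0 < e) :
    Tendsto (fun p : ℝ => p ^ e) (𝓝[>] 0) (𝓝[>] 0) := by
  refine tendsto_nhdsWithin_iff.mpr
    ⟨?_, eventually_mem_nhdsWithin.mono fun p hp => rpow_pos_of_pos hp e⟩
  simpa [zero_rpow he.ne'] using
    (continuousAt_rpow_const 0 e (Or.inr he.le)).tendsto.mono_left nhdsWithin_le_nhds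

theorem mul_one_add_div_rpow_inv_pow {N : ℝ} (hN : 0 < N) {d : ℕ} (hd : d ≠ 0) (u : ℝ) :
    N * (1 + u / N ^ (d : ℝ)⁻¹) ^ d = (N ^ (d : ℝ)⁻¹ + u) ^ d := by
  have hB : N ^ (d : ℝ)⁻¹ ≠ 0 := (rpow_pos_of_pos hN _).ne'
  calc N * (1 + u / N ^ (d : ℝ)⁻¹) ^ d = (N ^ (d : ℝ)⁻¹) ^ d * (1 + u / N ^ (d : ℝ)⁻¹) ^ d := by
        rw [rpow_inv_natCast_pow hN.le hd]
    _ = (N ^ (d : ℝ)⁻¹ + u) ^ d := by rw [← mul_pow, mul_add, mul_one, mul_div_cancel₀ _ hB]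

-- The windows of the statement for `k = 1 - 1/d`; the limit is `∫₀^y (x^{1/d} + c t)^d dt`.
theorem tendsto_mul_sum_natFloor_windows {d : ℕ} (hd : d ≠ 0) {c x y : ℝ} (hc : 0 ≤ c)
    (hx : 0 < x) (hy : 0 ≤ y) :
    Tendsto (fun p : ℝ => p * ∑ i ∈ range (⌊y / p ^ ((d : ℝ) + 1)⁻¹⌋₊ + 1),
        (⌊(⌊x / p ^ ((d : ℝ) / (d + 1))⌋₊ : ℝ)
          * (1 + c * i / (⌊x / p ^ ((d : ℝ) / (d + 1))⌋₊ : ℝ) ^ (d : ℝ)⁻¹) ^ d⌋₊ : ℝ))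
      (𝓝[>] 0)
      (𝓝 (∑ j ∈ range (d + 1), c ^ j * (x ^ (d : ℝ)⁻¹) ^ (d - j) * d.choose j
        * (y ^ (j + 1) / (j + 1)))) := by
  set q : ℝ → ℝ := fun p => p ^ ((d : ℝ) + 1)⁻¹
  set N : ℝ → ℝ := fun p => ⌊x / p ^ ((d : ℝ) / (d + 1))⌋₊
  set n : ℝ → ℕ := fun p => ⌊y / q p⌋₊ + 1 with hn_def
  have hq : Tendsto q (𝓝[>] 0) (𝓝[>] 0) := tendsto_rpow_const_nhdsGT_zero (by positivity)
  have hq0 : Tendsto q (𝓝[>] 0) (𝓝 0) := tendsto_nhdsWithin_iff.mp hq |>.1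
  have hqN : Tendsto (fun p => p ^ ((d : ℝ) / (d + 1)) * N p) (𝓝[>] 0) (𝓝 x) :=
    tendsto_mul_natFloor_div (tendsto_rpow_const_nhdsGT_zero (by positivity)) hx.le
  have hqB : Tendsto (fun p => q p * N p ^ (d : ℝ)⁻¹) (𝓝[>] 0) (𝓝 (x ^ (d : ℝ)⁻¹)) := by
    refine (hqN.rpow_const (Or.inl hx.ne')).congr' ?_
    filter_upwards [self_mem_nhdsWithin] with p (hp : 0 < p)
    rw [mul_rpow (by positivity) (by positivity), ← rpow_mul hp.le]
    congr 2
    field_simp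
  have hqn : Tendsto (fun p => q p * n p) (𝓝[>] 0) (𝓝 y) := by
    simpa [hn_def, mul_add] using (tendsto_mul_natFloor_div hq hy).add hq0
  have hpow : ∀ p : ℝ, 0 < p → q p ^ (d + 1) = p := fun p hp => by
    simpa using rpow_inv_natCast_pow hp.le (Nat.succ_ne_zero d)
  have hsum : Tendsto (fun p => p * ∑ i ∈ range (n p), N p * (1 + c * i / N p ^ (d : ℝ)⁻¹) ^ d)
      (𝓝[>] 0) (𝓝 (∑ j ∈ range (d + 1), c ^ j * (x ^ (d : ℝ)⁻¹) ^ (d - j) * d.choose j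
        * (y ^ (j + 1) / (j + 1)))) := by
    refine (tendsto_pow_succ_mul_sum_range_add_mul_pow hq0 hqn hqB d).congr' ?_
    filter_upwards [self_mem_nhdsWithin, hqN.eventually (lt_mem_nhds hx)] with p (hp : 0 < p) hNp
    have hN : 0 < N p := pos_of_mul_pos_right hNp (by positivity)
    simp only [hpow p hp, mul_one_add_div_rpow_inv_pow hN hd]
  have hsn : Tendsto (fun p => p * n p) (𝓝[>] 0) (𝓝 0) := by
    have h : Tendsto (fun p => q p ^ d * (q p * n p)) (𝓝[>] 0) (𝓝 0) := by
      simpa [hd] using (hq0.pow d).mul hqn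
    refine h.congr' ?_
    filter_upwards [self_mem_nhdsWithin] with p (hp : 0 < p)
    rw [← mul_assoc, ← pow_succ, hpow p hp]
  exact tendsto_mul_sum_natFloor (eventually_mem_nhdsWithin.mono fun p hp => le_of_lt hp)
    (fun p i => by positivity) hsum hsn

/-- Limit of the scaled time-to-first-loss distribution for TCP Compound
(k = 3/4): P(p^{(1-k)/(2-k)} G_p ≥ y) → exp(-xy - 2α(1-k)x^k y² - ...). -/
theorem tcp_compound_scaled_loss_time_limit
    (α x y k : ℝ) (hk : k = 3 / 4) (hα : 0 < α) (hx : 1 ≤ x) (hy : 0 ≤ y) :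
    Tendsto (fun p : ℝ =>
        (1 - p) ^ (∑ i ∈ Finset.range (⌊y / p ^ ((1 - k) / (2 - k))⌋₊ + 1),
          (⌊((⌊x / p ^ (1 / (2 - k))⌋₊ : ℝ)
              * (1 + α * (1 - k) * (i : ℝ) / (⌊x / p ^ (1 / (2 - k))⌋₊ : ℝ) ^ (1 - k))
                ^ (1 / (1 - k)))⌋₊ : ℝ)))
      (nhdsWithin 0 (Set.Ioi 0))
      (nhds (Real.exp (-(x * y) - 2 * α * (1 - k) * x ^ k * y ^ 2
        - 2 * α ^ 2 * (1 - k) ^ 2 * x ^ (2 * k - 1) * y ^ 3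
        - α ^ 3 * (1 - k) ^ 3 * x ^ (3 * k - 2) * y ^ 4
        - α ^ 4 * (1 - k) ^ 4 * x ^ (4 * k - 3) * y ^ 5 / 5))) := by
  subst hk
  have hx0 : 0 < x := by linarith
  rw [show ((1 : ℝ) - 3 / 4) / (2 - 3 / 4) = (((4 : ℕ) : ℝ) + 1)⁻¹ by norm_num,
    show (1 : ℝ) / (2 - 3 / 4) = ((4 : ℕ) : ℝ) / ((4 : ℕ) + 1) by norm_num,
    show (1 : ℝ) / (1 - 3 / 4) = (4 : ℕ) by norm_num,
    show (1 : ℝ) - 3 / 4 = ((4 : ℕ) : ℝ)⁻¹ by norm_num]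
  simp only [rpow_natCast]
  convert tendsto_one_sub_rpow_of_tendsto_mul
    (tendsto_mul_sum_natFloor_windows four_ne_zero (c := α * ((4 : ℕ) : ℝ)⁻¹) (by positivity)
      hx0 hy) using 3
  have hb : ∀ m : ℕ, (x ^ ((4 : ℕ) : ℝ)⁻¹) ^ m = x ^ ((m : ℝ) / 4) := fun m => by
    rw [← rpow_natCast, ← rpow_mul hx0.le]; ring_nf
  simp only [sum_range_succ, sum_range_zero, hb]
  norm_num [Nat.choose]
  ring
end

section
/- Fix k = 3/4, α > 0. For integers n, j with 1 ≤ n ≤ 5 and n−1 ≤ j ≤ 4, and for x, y > 0, the quantity x₀ m^n z^j, where x₀ = x p^{−1/(2−k)}, m = y p^{−(1−k)/(2−k)}, z = α(1−k) x₀^{k−1}, equals α^j (1−k)^j x^{1−j+kj} y^n p^{(−1+(j−n)(1−k))/(2−k)}. Consequently, lim_{p→0} (1−p)^{x₀ m^n z^j} = e^{−α^{n−1}(1−k)^{n−1} x^{1−(n−1)(1−k)} y^n} if j = n−1, and lim_{p→0} (1−p)^{x₀ m^n z^j} = 1 if j > n−1. -/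
open Real Filter

lemma log_one_sub_div_tendsto :
    Tendsto (fun p : ℝ => Real.log (1 - p) / p) (nhdsWithin 0 (Set.Ioi 0)) (nhds (-1)) := by
  have hd : HasDerivAt (fun p : ℝ => Real.log (1 - p)) (-1) 0 := by
    have h1 : HasDerivAt (fun p : ℝ => 1 - p) (-1) 0 := by
      simpa using (hasDerivAt_id (0:ℝ)).const_sub 1
    have := h1.log (by norm_num)
    simpa using this
  have h2 := hasDerivAt_iff_tendsto_slope.mp hd
  have h3 : Tendsto (slope (fun p : ℝ => Real.log (1 - p)) 0) (nhdsWithin 0 (Set.Ioi 0))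
      (nhds (-1)) := h2.mono_left (nhdsWithin_mono _ (fun x hx => ne_of_gt hx))
  refine h3.congr' ?_
  filter_upwards [self_mem_nhdsWithin] with p hp
  simp [slope_def_field]

lemma ev_lt_one : ∀ᶠ p : ℝ in nhdsWithin 0 (Set.Ioi 0), p < 1 := by
  have h1 : Set.Iio (1:ℝ) ∈ nhdsWithin (0:ℝ) (Set.Ioi 0) :=
    nhdsWithin_le_nhds (Iio_mem_nhds one_pos)
  filter_upwards [h1] with p hp using hp

lemma tendsto_base_inv (C : ℝ) :
    Tendsto (fun p : ℝ => (1 - p) ^ (C * p ^ (-1 : ℝ)))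
      (nhdsWithin 0 (Set.Ioi 0)) (nhds (Real.exp (-C))) := by
  have hmain : Tendsto (fun p : ℝ => Real.log (1 - p) * (C * p ^ (-1:ℝ)))
      (nhdsWithin 0 (Set.Ioi 0)) (nhds (-C)) := by
    have h := log_one_sub_div_tendsto.const_mul C
    have h' : Tendsto (fun p : ℝ => C * (Real.log (1 - p) / p)) (nhdsWithin 0 (Set.Ioi 0))
        (nhds (-C)) := by simpa [mul_comm] using h
    refine h'.congr' ?_
    filter_upwards [self_mem_nhdsWithin] with p hp
    rw [Real.rpow_neg_one]
    field_simp
  have := (Real.continuous_exp.continuousAt (x := -C)).tendsto.comp hmain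
  refine this.congr' ?_
  filter_upwards [self_mem_nhdsWithin, ev_lt_one] with p hp hp1
  rw [Function.comp_apply, Real.rpow_def_of_pos (by linarith : (0:ℝ) < 1 - p)]

lemma tendsto_base_gt (C e : ℝ) (he : 0 < e + 1) :
    Tendsto (fun p : ℝ => (1 - p) ^ (C * p ^ e))
      (nhdsWithin 0 (Set.Ioi 0)) (nhds 1) := by
  have hpow : Tendsto (fun p : ℝ => p ^ (e + 1)) (nhdsWithin 0 (Set.Ioi 0)) (nhds 0) := by
    have hc : ContinuousAt (fun p : ℝ => p ^ (e+1)) 0 :=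
      Real.continuousAt_rpow_const 0 (e+1) (Or.inr he.le)
    have := hc.tendsto.mono_left (nhdsWithin_le_nhds (s := Set.Ioi 0))
    simpa [Real.zero_rpow (ne_of_gt he)] using this
  have hmain : Tendsto (fun p : ℝ => Real.log (1 - p) * (C * p ^ e))
      (nhdsWithin 0 (Set.Ioi 0)) (nhds 0) := by
    have h : Tendsto (fun p : ℝ => C * p ^ (e+1) * (Real.log (1 - p) / p))
        (nhdsWithin 0 (Set.Ioi 0)) (nhds (C * 0 * (-1))) :=
      ((tendsto_const_nhds.mul hpow).mul log_one_sub_div_tendsto)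
    refine Tendsto.congr' ?_ (by simpa using h)
    filter_upwards [self_mem_nhdsWithin] with p hp
    have hpe : p ^ (e + 1) = p ^ e * p := Real.rpow_add_one (ne_of_gt hp) e
    have hp0 : p ≠ 0 := ne_of_gt (Set.mem_Ioi.mp hp)
    rw [hpe]
    field_simp
  have := (Real.continuous_exp.continuousAt (x := (0:ℝ))).tendsto.comp hmain
  refine Tendsto.congr' ?_ (by simpa using this)
  filter_upwards [self_mem_nhdsWithin, ev_lt_one] with p hp hp1
  rw [Function.comp_apply, Real.rpow_def_of_pos (by linarith : (0:ℝ) < 1 - p)]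

/-- Key scaling computation: the monomial x₀ m^n z^j rewritten in terms of p,
and the limits of (1-p)^{x₀ m^n z^j} as p → 0⁺ according to whether j = n-1
or j > n-1. -/
theorem tcp_compound_scaling_monomials
    (α x y k : ℝ) (hk : k = 3 / 4) (hα : 0 < α) (hx : 0 < x) (hy : 0 < y)
    (n j : ℕ) (hn1 : 1 ≤ n) (hn5 : n ≤ 5) (hjn : n - 1 ≤ j) (hj4 : j ≤ 4) :
    (∀ p : ℝ, 0 < p → p < 1 →
      (x * p ^ (-(1 / (2 - k)))) * (y * p ^ (-((1 - k) / (2 - k)))) ^ n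
          * (α * (1 - k) * (x * p ^ (-(1 / (2 - k)))) ^ (k - 1)) ^ j
        = α ^ j * (1 - k) ^ j * x ^ (1 - (j : ℝ) + k * (j : ℝ)) * y ^ n
            * p ^ ((-1 + ((j : ℝ) - (n : ℝ)) * (1 - k)) / (2 - k))) ∧
    (j = n - 1 →
      Tendsto (fun p : ℝ =>
          (1 - p) ^ ((x * p ^ (-(1 / (2 - k)))) * (y * p ^ (-((1 - k) / (2 - k)))) ^ n
            * (α * (1 - k) * (x * p ^ (-(1 / (2 - k)))) ^ (k - 1)) ^ j))
        (nhdsWithin 0 (Set.Ioi 0))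
        (nhds (Real.exp (-(α ^ (n - 1) * (1 - k) ^ (n - 1)
          * x ^ (1 - ((n : ℝ) - 1) * (1 - k)) * y ^ n))))) ∧
    (n - 1 < j →
      Tendsto (fun p : ℝ =>
          (1 - p) ^ ((x * p ^ (-(1 / (2 - k)))) * (y * p ^ (-((1 - k) / (2 - k)))) ^ n
            * (α * (1 - k) * (x * p ^ (-(1 / (2 - k)))) ^ (k - 1)) ^ j))
        (nhdsWithin 0 (Set.Ioi 0)) (nhds 1)) := by
  subst hk
  have hid : ∀ p : ℝ, 0 < p → p < 1 →
      (x * p ^ (-(1 / (2 - (3:ℝ)/4)))) * (y * p ^ (-((1 - (3:ℝ)/4) / (2 - (3:ℝ)/4)))) ^ n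
          * (α * (1 - (3:ℝ)/4) * (x * p ^ (-(1 / (2 - (3:ℝ)/4)))) ^ ((3:ℝ)/4 - 1)) ^ j
        = α ^ j * (1 - (3:ℝ)/4) ^ j * x ^ (1 - (j : ℝ) + (3:ℝ)/4 * (j : ℝ)) * y ^ n
            * p ^ ((-1 + ((j : ℝ) - (n : ℝ)) * (1 - (3:ℝ)/4)) / (2 - (3:ℝ)/4)) := by
    intro p hp _
    have hpp : ∀ a : ℝ, (0:ℝ) < p ^ a := fun a => Real.rpow_pos_of_pos hp a
    have hxp : ∀ a : ℝ, (0:ℝ) < x ^ a := fun a => Real.rpow_pos_of_pos hx a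
    rw [mul_pow, mul_pow, mul_pow,
      ← Real.rpow_natCast (p ^ (-((1 - (3:ℝ)/4) / (2 - (3:ℝ)/4)))) n,
      ← Real.rpow_mul hp.le,
      Real.mul_rpow hx.le (hpp _).le,
      ← Real.rpow_mul hp.le,
      ← Real.rpow_natCast (x ^ ((3:ℝ)/4 - 1) * p ^ (-(1 / (2 - (3:ℝ)/4)) * ((3:ℝ)/4 - 1))) j,
      Real.mul_rpow (hxp _).le (hpp _).le,
      ← Real.rpow_mul hx.le, ← Real.rpow_mul hp.le]
    rw [show (1 : ℝ) - (j:ℝ) + (3:ℝ)/4 * (j:ℝ) = 1 + ((3:ℝ)/4 - 1) * (j:ℝ) by ring,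
      show ((-1 + ((j : ℝ) - (n : ℝ)) * (1 - (3:ℝ)/4)) / (2 - (3:ℝ)/4))
        = (-(1 / (2 - (3:ℝ)/4))) + (-((1 - (3:ℝ)/4) / (2 - (3:ℝ)/4))) * (n:ℝ)
          + (-(1 / (2 - (3:ℝ)/4)) * ((3:ℝ)/4 - 1)) * (j:ℝ) by ring,
      Real.rpow_add hx, Real.rpow_add hp, Real.rpow_add hp, Real.rpow_one]
    ring
  refine ⟨hid, ?_, ?_⟩
  · intro hj
    subst hj
    have hcast : ((n - 1 : ℕ) : ℝ) = (n : ℝ) - 1 := by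
      rw [Nat.cast_sub hn1]; norm_num
    have hexp : ((-1 + (((n-1 : ℕ) : ℝ) - (n : ℝ)) * (1 - (3:ℝ)/4)) / (2 - (3:ℝ)/4))
        = (-1 : ℝ) := by rw [hcast]; ring
    have hxe : (1 : ℝ) - ((n-1 : ℕ) : ℝ) + (3:ℝ)/4 * ((n-1 : ℕ) : ℝ)
        = 1 - ((n : ℝ) - 1) * (1 - (3:ℝ)/4) := by rw [hcast]; ring
    have := tendsto_base_inv (α ^ (n - 1) * (1 - (3:ℝ)/4) ^ (n - 1)
      * x ^ (1 - ((n : ℝ) - 1) * (1 - (3:ℝ)/4)) * y ^ n)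
    refine Tendsto.congr' ?_ this
    filter_upwards [self_mem_nhdsWithin, ev_lt_one] with p hp hp1
    rw [hid p hp hp1, hexp, hxe]
  · intro hj
    have hnj : n ≤ j := by omega
    have hnjr : (n : ℝ) ≤ (j : ℝ) := Nat.cast_le.mpr hnj
    set e : ℝ := (-1 + ((j : ℝ) - (n : ℝ)) * (1 - (3:ℝ)/4)) / (2 - (3:ℝ)/4) with he_def
    have he : 0 < e + 1 := by
      rw [he_def]
      have : (-1 + ((j : ℝ) - (n : ℝ)) * (1 - (3:ℝ)/4)) / (2 - (3:ℝ)/4)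
          = (4/5 : ℝ) * (-1 + ((j : ℝ) - (n : ℝ)) * (1/4)) := by ring
      rw [this]
      linarith
    have := tendsto_base_gt (α ^ j * (1 - (3:ℝ)/4) ^ j
      * x ^ (1 - (j : ℝ) + (3:ℝ)/4 * (j : ℝ)) * y ^ n) e he
    refine Tendsto.congr' ?_ this
    filter_upwards [self_mem_nhdsWithin, ev_lt_one] with p hp hp1
    rw [hid p hp hp1]
end

section
/- Let {Z_n} be a nonnegative process adapted to a filtration {F_n} with Z_n ≥ 1 for all n, and suppose there is η ∈ (0,1) and a stopping time T such that E[Z_{n+1} | F_n] ≤ η Z_n on the event {n < T}. Then E[η^{−T} | F₀] ≤ Z₀ in the sense that E[η^{−(n∧T)} Z_{n∧T} | F₀] ≤ Z₀ for all n, and by Fatou's lemma E[η^{−T}] ≤ E[Z₀]. -/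
/-!
Rescaling by `η⁻¹ ^ n` turns the geometric drift of `Z` into the supermartingale inequality
for `V n = η⁻¹ ^ n • Z n` on `{n < T}`, so the stopped process `U n = V (n ∧ T)` is a
supermartingale started at `Z 0`. Since `Z ≥ 1`, `η⁻¹ ^ (n ∧ T) ≤ U n`, whose mean is at most
`E[Z 0]`, and monotone convergence in `n` gives `E[η⁻¹ ^ T] ≤ E[Z 0]`.
-/

open Real MeasureTheory Filter Topology

section

variable {Ω : Type*} {m0 : MeasurableSpace Ω} {μ : Measure Ω}

theorem stoppedProcess_sub_stoppedProcess_succ {E : Type*} [AddGroup E] (u : ℕ → Ω → E)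
    (τ : Ω → WithTop ℕ) (n : ℕ) :
    stoppedProcess u τ n - stoppedProcess u τ (n + 1) =
      {ω | (n : WithTop ℕ) < τ ω}.indicator (u n - u (n + 1)) := by
  funext ω
  by_cases h : (n : WithTop ℕ) < τ ω
  · have hsucc : ((n + 1 : ℕ) : WithTop ℕ) ≤ τ ω := by
      rw [Nat.cast_succ]; exact (ENat.add_one_le_iff (ENat.natCast_ne_top n)).2 h
    simp [h, stoppedProcess_eq_of_le (i := n) h.le, stoppedProcess_eq_of_le (i := n + 1) hsucc]
  · have hle : τ ω ≤ n := not_lt.1 h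
    have hle_succ : τ ω ≤ ((n + 1 : ℕ) : WithTop ℕ) := hle.trans (by exact_mod_cast n.le_succ)
    simp [h, stoppedProcess_eq_of_ge (i := n) hle, stoppedProcess_eq_of_ge (i := n + 1) hle_succ]

theorem stoppedProcess_natCast_apply {β : Type*} (u : ℕ → Ω → β) (T : Ω → ℕ) (n : ℕ) (ω : Ω) :
    stoppedProcess u (fun ω => (T ω : WithTop ℕ)) n ω = u (min n (T ω)) ω := by
  rcases le_total n (T ω) with h | h
  · rw [stoppedProcess_eq_of_le (τ := fun ω => (T ω : WithTop ℕ)) (WithTop.coe_le_coe.2 h),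
      min_eq_left h]
  · rw [stoppedProcess_eq_of_ge (τ := fun ω => (T ω : WithTop ℕ)) (WithTop.coe_le_coe.2 h),
      min_eq_right h]
    rfl

theorem supermartingale_stoppedProcess_of_condExp_succ_le
    {E : Type*} [NormedAddCommGroup E] [NormedSpace ℝ E] [CompleteSpace E] [PartialOrder E]
    [IsOrderedAddMonoid E] [ClosedIciTopology E] [IsOrderedModule ℝ E] [IsFiniteMeasure μ]
    {F : Filtration ℕ m0} {u : ℕ → Ω → E} {τ : Ω → WithTop ℕ}
    (hu : StronglyAdapted F u) (hint : ∀ n, Integrable (u n) μ) (hτ : IsStoppingTime F τ)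
    (hdrift : ∀ n : ℕ, ∀ᵐ ω ∂μ, (n : WithTop ℕ) < τ ω → μ[u (n + 1)|F n] ω ≤ u n ω) :
    Supermartingale (stoppedProcess u τ) F μ := by
  refine supermartingale_of_condExp_sub_nonneg_nat (hu.stoppedProcess_of_discrete hτ)
    (integrable_stoppedProcess hτ hint) fun n => ?_
  have hgt : MeasurableSet[F n] {ω | (n : WithTop ℕ) < τ ω} := hτ.measurableSet_gt n
  have hcond_sub : μ[u n - u (n + 1)|F n] =ᵐ[μ] u n - μ[u (n + 1)|F n] := by
    refine (condExp_sub (hint n) (hint (n + 1)) _).trans ?_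
    rw [condExp_of_stronglyMeasurable (F.le n) (hu n) (hint n)]
  rw [stoppedProcess_sub_stoppedProcess_succ]
  filter_upwards [condExp_indicator ((hint n).sub (hint (n + 1))) hgt, hcond_sub, hdrift n]
    with ω hind hsub hle
  rw [Pi.zero_apply, hind]
  refine Set.indicator_apply_nonneg fun h => ?_
  rw [hsub, Pi.sub_apply, sub_nonneg]
  exact hle h

theorem ae_condExp_inv_pow_smul_succ_le {F : Filtration ℕ m0} {Z : ℕ → Ω → ℝ} {η : ℝ}
    (hη : 0 < η) {P : Ω → Prop} {n : ℕ} (hdrift : ∀ᵐ ω ∂μ, P ω → μ[Z (n + 1)|F n] ω ≤ η * Z n ω) :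
    ∀ᵐ ω ∂μ, P ω → μ[η⁻¹ ^ (n + 1) • Z (n + 1)|F n] ω ≤ (η⁻¹ ^ n • Z n) ω := by
  filter_upwards [hdrift, condExp_smul (η⁻¹ ^ (n + 1)) (Z (n + 1)) (F n)] with ω hω hsmul hP
  rw [hsmul]
  calc (η⁻¹ ^ (n + 1) • μ[Z (n + 1)|F n]) ω = η⁻¹ ^ (n + 1) * μ[Z (n + 1)|F n] ω := rfl
    _ ≤ η⁻¹ ^ (n + 1) * (η * Z n ω) := by gcongr; exact hω hP
    _ = (η⁻¹ ^ n • Z n) ω := by simp only [Pi.smul_apply, smul_eq_mul, pow_succ]; field_simp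

theorem integral_le_of_monotone_of_tendsto {f : ℕ → Ω → ℝ} {g : Ω → ℝ} {C : ℝ}
    (hf : ∀ n, Integrable (f n) μ) (hf0 : 0 ≤ᵐ[μ] f 0)
    (hmono : ∀ᵐ ω ∂μ, Monotone fun n => f n ω)
    (hlim : ∀ᵐ ω ∂μ, Tendsto (fun n => f n ω) atTop (𝓝 (g ω)))
    (hC : ∀ n, ∫ ω, f n ω ∂μ ≤ C) :
    ∫ ω, g ω ∂μ ≤ C := by
  have hf_nonneg : ∀ n, 0 ≤ᵐ[μ] f n := fun n => by
    filter_upwards [hf0, hmono] with ω h0 hω using h0.trans (hω n.zero_le)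
  have hg_nonneg : 0 ≤ᵐ[μ] g := by
    filter_upwards [hf0, hmono, hlim] with ω h0 hω hωlim
      using h0.trans (ge_of_tendsto' hωlim fun n => hω n.zero_le)
  have hC0 : 0 ≤ C := (integral_nonneg_of_ae hf0).trans (hC 0)
  have hlintegral : ∫⁻ ω, ENNReal.ofReal (g ω) ∂μ ≤ ENNReal.ofReal C := by
    refine le_of_tendsto' (lintegral_tendsto_of_tendsto_of_monotone
      (fun n => (hf n).aemeasurable.ennreal_ofReal) ?_ ?_) fun n => ?_
    · filter_upwards [hmono] with ω hω m k hmk using ENNReal.ofReal_le_ofReal (hω hmk)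
    · filter_upwards [hlim] with ω hω using (ENNReal.continuous_ofReal.tendsto _).comp hω
    · rw [← ofReal_integral_eq_lintegral_ofReal (hf n) (hf_nonneg n)]
      exact ENNReal.ofReal_le_ofReal (hC n)
  rw [integral_eq_lintegral_of_nonneg_ae hg_nonneg
    (aestronglyMeasurable_of_tendsto_ae _ (fun n => (hf n).aestronglyMeasurable) hlim)]
  exact ENNReal.toReal_le_of_le_ofReal hC0 hlintegral

theorem MeasureTheory.IsStoppingTime.measurable_of_natCast {F : Filtration ℕ m0} {T : Ω → ℕ}
    (hT : IsStoppingTime F fun ω => (T ω : WithTop ℕ)) : Measurable T :=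
  measurable_to_countable' fun k => F.le k _ <| by
    convert hT.measurableSet_eq k using 1
    ext ω
    exact WithTop.coe_eq_coe.symm

theorem integral_pow_le_of_forall_integral_pow_min_le [IsFiniteMeasure μ] {T : Ω → ℕ}
    (hT : Measurable T) {a C : ℝ} (ha : 1 ≤ a) (hC : ∀ n, ∫ ω, a ^ min n (T ω) ∂μ ≤ C) :
    ∫ ω, a ^ T ω ∂μ ≤ C := by
  have hint : ∀ n, Integrable (fun ω => a ^ min n (T ω)) μ := fun n =>
    .of_bound (measurable_const.pow (measurable_const.min hT)).aestronglyMeasurable (a ^ n)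
      (ae_of_all _ fun ω => by
        rw [Real.norm_of_nonneg (by positivity)]
        exact pow_le_pow_right₀ ha (min_le_left _ _))
  refine integral_le_of_monotone_of_tendsto hint (ae_of_all _ fun ω => by positivity)
    (ae_of_all _ fun ω m k hmk => pow_le_pow_right₀ ha (min_le_min_right _ hmk))
    (ae_of_all _ fun ω => tendsto_atTop_of_eventually_const (i₀ := T ω) fun n hn => by
      rw [min_eq_right hn]) hC

end

/-- Geometric drift (Foster–Lyapunov) on {n < T} implies the supermartingale
bound E[η^{-(n∧T)} Z_{n∧T} | F₀] ≤ Z₀ and hence E[η^{-T}] ≤ E[Z₀]. -/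
theorem geometric_drift_hitting_time_exponential_moment
    {Ω : Type*} {m0 : MeasurableSpace Ω} {μ : Measure Ω} [IsProbabilityMeasure μ]
    (F : Filtration ℕ m0) (Z : ℕ → Ω → ℝ)
    (hadapted : Adapted F Z) (hint : ∀ n, Integrable (Z n) μ)
    (hZ1 : ∀ n ω, 1 ≤ Z n ω)
    (η : ℝ) (hη0 : 0 < η) (hη1 : η < 1)
    (T : Ω → ℕ) (hT : IsStoppingTime F (fun ω => (T ω : WithTop ℕ)))
    (hdrift : ∀ n : ℕ, ∀ᵐ ω ∂μ, n < T ω → (μ[Z (n + 1)|F n]) ω ≤ η * Z n ω) :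
    (∀ n : ℕ, ∀ᵐ ω ∂μ,
      (μ[fun ω' => η⁻¹ ^ (min n (T ω')) * Z (min n (T ω')) ω'|F 0]) ω ≤ Z 0 ω) ∧
    ∫ ω, η⁻¹ ^ (T ω) ∂μ ≤ ∫ ω, Z 0 ω ∂μ := by
  have hη_inv : 1 ≤ η⁻¹ := one_le_inv₀ hη0 |>.2 hη1.le
  set V : ℕ → Ω → ℝ := fun n => η⁻¹ ^ n • Z n
  set U := stoppedProcess V fun ω => (T ω : WithTop ℕ)
  have hU : ∀ n, U n = fun ω => η⁻¹ ^ (min n (T ω)) * Z (min n (T ω)) ω := fun n =>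
    funext (stoppedProcess_natCast_apply V T n)
  have hsuper : Supermartingale U F μ :=
    supermartingale_stoppedProcess_of_condExp_succ_le
      (fun n => (hadapted n).stronglyMeasurable.const_smul _) (fun n => (hint n).smul _) hT
      fun n => (ae_condExp_inv_pow_smul_succ_le hη0 (hdrift n)).mono fun ω h hlt =>
        h (WithTop.coe_lt_coe.1 hlt)
  have hU0 : U 0 = Z 0 := by simp [hU]
  have hcond : ∀ n, μ[U n|F 0] ≤ᵐ[μ] Z 0 := fun n => hU0 ▸ hsuper.condExp_ae_le n.zero_le
  refine ⟨fun n => hU n ▸ hcond n, ?_⟩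
  refine integral_pow_le_of_forall_integral_pow_min_le hT.measurable_of_natCast hη_inv
    fun n => ?_
  have hmin_le : ∀ ω, η⁻¹ ^ min n (T ω) ≤ U n ω := fun ω => by
    rw [hU]
    exact le_mul_of_one_le_right (by positivity) (hZ1 _ ω)
  calc ∫ ω, η⁻¹ ^ min n (T ω) ∂μ ≤ ∫ ω, U n ω ∂μ :=
        integral_mono_of_nonneg (ae_of_all _ fun ω => by positivity) (hsuper.integrable n)
          (ae_of_all _ hmin_le)
    _ ≤ ∫ ω, U 0 ω ∂μ := by simpa using hsuper.setIntegral_le n.zero_le MeasurableSet.univ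
    _ = ∫ ω, Z 0 ω ∂μ := by rw [hU0]
end
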